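/- arXiv:2205.06447 — 7 statements merged into one kernel-verified Lean document; each statement's English description precedes it below -/
import Mathlib

section
/- Matching of even derivatives at the endpoint: for every real number z and every natural number k, the 2k-th derivative of the function τ ↦ e^{-z cosh τ} evaluated at τ = 0 equals (-1)^k times the 2k-th derivative of the function τ ↦ e^{z cos τ} evaluated at τ = π. -/
open Real

private lemma iteratedDeriv_ofReal_comp (f : ℝ → ℝ) (hf : ContDiff ℝ (⊤ : ℕ∞) f) (n : ℕ) :
    iteratedDeriv n (fun x : ℝ => (f x : ℂ)) = fun x => ((iteratedDeriv n f x : ℝ) : ℂ) := by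
  induction n with
  | zero => simp [iteratedDeriv_zero]
  | succ n ih =>
    funext x
    rw [iteratedDeriv_succ, ih, iteratedDeriv_succ]
    have hd : DifferentiableAt ℝ (iteratedDeriv n f) x :=
      (hf.differentiable_iteratedDeriv n (by exact_mod_cast ENat.coe_lt_top n)).differentiableAt
    exact hd.hasDerivAt.ofReal_comp.deriv

private lemma iteratedDeriv_comp_ofReal (F : ℂ → ℂ) (hF : Differentiable ℂ F) (n : ℕ) :
    iteratedDeriv n (fun x : ℝ => F (x : ℂ)) = fun x : ℝ => iteratedDeriv n F (x : ℂ) := by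
  induction n with
  | zero => simp [iteratedDeriv_zero]
  | succ n ih =>
    funext x
    rw [iteratedDeriv_succ, ih, iteratedDeriv_succ]
    have hd : DifferentiableAt ℂ (iteratedDeriv n F) (x : ℂ) :=
      ((hF.contDiff (n := (⊤ : ℕ∞))).differentiable_iteratedDeriv n (by exact_mod_cast ENat.coe_lt_top n)).differentiableAt
    exact hd.hasDerivAt.comp_ofReal.deriv

/-- Matching of even derivatives at the endpoint: for every real `z` and `k : ℕ`, the `2k`-th
derivative of `τ ↦ e^{-z cosh τ}` at `τ = 0` equals `(-1)^k` times the `2k`-th derivative of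
`τ ↦ e^{z cos τ}` at `τ = π`. -/
theorem even_derivatives_match (z : ℝ) (k : ℕ) :
    iteratedDeriv (2 * k) (fun τ : ℝ => Real.exp (-z * Real.cosh τ)) 0
      = (-1 : ℝ) ^ k * iteratedDeriv (2 * k) (fun τ : ℝ => Real.exp (z * Real.cos τ)) π := by
  set n := 2 * k with hn
  set F : ℂ → ℂ := fun w => Complex.exp (-(z : ℂ) * Complex.cosh w) with hFdef
  set G : ℂ → ℂ := fun w => Complex.exp (-(z : ℂ) * Complex.cos w) with hGdef
  have hF : Differentiable ℂ F := (Complex.differentiable_cosh.const_mul _).cexp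
  have hG : Differentiable ℂ G := (Complex.differentiable_cos.const_mul _).cexp
  -- real functions
  have hf1 : ContDiff ℝ (⊤ : ℕ∞) (fun τ : ℝ => Real.exp (-z * Real.cosh τ)) :=
    Real.contDiff_exp.comp (contDiff_const.mul Real.contDiff_cosh)
  have hh : ContDiff ℝ (⊤ : ℕ∞) (fun τ : ℝ => Real.exp (-z * Real.cos τ)) :=
    Real.contDiff_exp.comp (contDiff_const.mul Real.contDiff_cos)
  -- LHS as complex derivative of F
  have hLHS : ((iteratedDeriv n (fun τ : ℝ => Real.exp (-z * Real.cosh τ)) 0 : ℝ) : ℂ)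
      = iteratedDeriv n F 0 := by
    have he : (fun x : ℝ => ((Real.exp (-z * Real.cosh x) : ℝ) : ℂ)) = fun x : ℝ => F (x : ℂ) := by
      funext x
      simp [hFdef, Complex.ofReal_exp, Complex.ofReal_cosh]
    have := congrFun (iteratedDeriv_ofReal_comp _ hf1 n) 0
    rw [he, iteratedDeriv_comp_ofReal F hF n] at this
    simpa using this.symm
  -- RHS shift: derivative at π equals derivative of τ ↦ exp(-z cos τ) at 0
  have hshift : iteratedDeriv n (fun τ : ℝ => Real.exp (z * Real.cos τ)) π
      = iteratedDeriv n (fun τ : ℝ => Real.exp (-z * Real.cos τ)) 0 := by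
    have := congrFun (iteratedDeriv_comp_add_const n
      (fun τ : ℝ => Real.exp (z * Real.cos τ)) π) 0
    rw [zero_add] at this
    rw [← this]
    congr 1
    funext τ
    rw [Real.cos_add_pi]
    ring_nf
  -- RHS as complex derivative of G
  have hRHS : ((iteratedDeriv n (fun τ : ℝ => Real.exp (-z * Real.cos τ)) 0 : ℝ) : ℂ)
      = iteratedDeriv n G 0 := by
    have he : (fun x : ℝ => ((Real.exp (-z * Real.cos x) : ℝ) : ℂ)) = fun x : ℝ => G (x : ℂ) := by
      funext x
      simp [hGdef, Complex.ofReal_exp, Complex.ofReal_cos]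
    have := congrFun (iteratedDeriv_ofReal_comp _ hh n) 0
    rw [he, iteratedDeriv_comp_ofReal G hG n] at this
    simpa using this.symm
  -- relation between F and G derivatives at 0
  have hFG : iteratedDeriv n G 0 = Complex.I ^ n * iteratedDeriv n F 0 := by
    have hGF : G = fun w => F (Complex.I * w) := by
      funext w
      simp [hFdef, hGdef, mul_comm Complex.I w, Complex.cosh_mul_I]
    have := congrFun (iteratedDeriv_comp_const_smul (f := F) (hF.contDiff (n := n)) Complex.I) 0
    rw [mul_zero] at this
    rw [hGF]
    simpa [smul_eq_mul] using this
  have hIpow : Complex.I ^ n = (-1 : ℂ) ^ k := by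
    rw [hn, pow_mul, Complex.I_sq]
  -- conclude
  have key : ((iteratedDeriv n (fun τ : ℝ => Real.exp (-z * Real.cosh τ)) 0 : ℝ) : ℂ)
      = (((-1 : ℝ) ^ k * iteratedDeriv n (fun τ : ℝ => Real.exp (z * Real.cos τ)) π : ℝ) : ℂ) := by
    rw [hLHS]
    push_cast
    rw [hshift]
    push_cast
    rw [hRHS, hFG, hIpow]
    have h1 : ((-1 : ℂ) ^ k) * ((-1 : ℂ) ^ k) = 1 := by
      rw [← pow_add, ← two_mul, pow_mul]; norm_num
    rw [← mul_assoc, h1, one_mul]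
  exact_mod_cast key
end

section
/- Derivative bound for the oscillatory exponential with a cutoff: let m be a natural number and let ψ : ℝ → ℝ be a smooth function such that |ψ^{(j)}(τ)| ≤ M for all τ ∈ ℝ and all 0 ≤ j ≤ 2m. Then there is a constant C, depending only on m and M, such that for all z ≥ 1 and all τ ∈ ℝ, |D^{2m}[σ ↦ e^{z cos σ} ψ(σ)](τ)| ≤ C z^{2m} e^{z cos τ}, where D^{2m}[f](τ) denotes the 2m-th derivative of f at τ. -/
open Real

lemma sin_iter_cases (i : ℕ) :
    iteratedDeriv i Real.sin = Real.sin ∨ iteratedDeriv i Real.sin = Real.cos ∨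
    iteratedDeriv i Real.sin = (fun x => -Real.sin x) ∨
    iteratedDeriv i Real.sin = (fun x => -Real.cos x) := by
  induction i with
  | zero => left; simp
  | succ n ih =>
    rw [iteratedDeriv_succ]
    rcases ih with h | h | h | h <;> rw [h]
    · right; left; exact Real.deriv_sin
    · right; right; left
      funext x; simp [Real.deriv_cos]
    · right; right; right
      funext x
      rw [deriv.fun_neg]; simp [Real.deriv_cos]
    · left
      funext x
      rw [deriv.fun_neg]; simp

lemma sin_iter_bound (i : ℕ) (τ : ℝ) : |iteratedDeriv i Real.sin τ| ≤ 1 := by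
  rcases sin_iter_cases i with h | h | h | h <;> rw [h] <;>
    simp [abs_le, Real.neg_one_le_sin, Real.sin_le_one, Real.neg_one_le_cos, Real.cos_le_one]

lemma iter_const_mul (c : ℝ) {f : ℝ → ℝ} (hf : ContDiff ℝ (⊤ : ℕ∞) f) (n : ℕ) (x : ℝ) :
    iteratedDeriv n (fun y => c * f y) x = c * iteratedDeriv n f x := by
  simp_rw [← iteratedDerivWithin_univ]
  exact iteratedDerivWithin_const_mul (Set.mem_univ x) uniqueDiffOn_univ c
    (hf.contDiffWithinAt.of_le (by exact_mod_cast (le_top : (n : ℕ∞) ≤ ⊤)))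

lemma iter_sub {f g : ℝ → ℝ} (hf : ContDiff ℝ (⊤ : ℕ∞) f) (hg : ContDiff ℝ (⊤ : ℕ∞) g)
    (n : ℕ) (x : ℝ) :
    iteratedDeriv n (fun y => f y - g y) x = iteratedDeriv n f x - iteratedDeriv n g x := by
  simp_rw [← iteratedDerivWithin_univ]
  exact iteratedDerivWithin_sub (Set.mem_univ x) uniqueDiffOn_univ
    (hf.contDiffWithinAt.of_le (by exact_mod_cast (le_top : (n : ℕ∞) ≤ ⊤)))
    (hg.contDiffWithinAt.of_le (by exact_mod_cast (le_top : (n : ℕ∞) ≤ ⊤)))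

lemma aux_bound (n : ℕ) : ∃ C : ℝ, 0 ≤ C ∧ ∀ (M : ℝ), 0 ≤ M → ∀ ψ : ℝ → ℝ,
    ContDiff ℝ (⊤ : ℕ∞) ψ →
    (∀ τ : ℝ, ∀ j : ℕ, j ≤ n → |iteratedDeriv j ψ τ| ≤ M) →
    ∀ z : ℝ, 1 ≤ z → ∀ τ : ℝ,
      |iteratedDeriv n (fun σ => Real.exp (z * Real.cos σ) * ψ σ) τ|
        ≤ C * M * z ^ n * Real.exp (z * Real.cos τ) := by
  induction n with
  | zero =>
    refine ⟨1, zero_le_one, fun M hM ψ hψ hbd z hz τ => ?_⟩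
    simp only [iteratedDeriv_zero, pow_zero]
    rw [abs_mul, abs_of_pos (Real.exp_pos _)]
    have := hbd τ 0 le_rfl
    simp only [iteratedDeriv_zero] at this
    nlinarith [Real.exp_pos (z * Real.cos τ), abs_nonneg (ψ τ)]
  | succ n ih =>
    obtain ⟨C, hC0, hC⟩ := ih
    refine ⟨C * (2 ^ n + 1), by positivity, fun M hM ψ hψ hbd z hz τ => ?_⟩
    have hz0 : (0:ℝ) < z := lt_of_lt_of_le one_pos hz
    -- the smooth derivative of ψ
    have hψ' : ContDiff ℝ (⊤ : ℕ∞) (deriv ψ) := (contDiff_infty_iff_deriv.mp hψ).2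
    set φ : ℝ → ℝ := fun σ => deriv ψ σ - z * (Real.sin σ * ψ σ) with hφdef
    have hφ : ContDiff ℝ (⊤ : ℕ∞) φ :=
      hψ'.sub (contDiff_const.mul (Real.contDiff_sin.mul hψ))
    -- step 1 : derivative rewrite
    have hderiv : deriv (fun σ => Real.exp (z * Real.cos σ) * ψ σ)
        = fun σ => Real.exp (z * Real.cos σ) * φ σ := by
      funext σ
      have hE : HasDerivAt (fun σ => Real.exp (z * Real.cos σ))
          (Real.exp (z * Real.cos σ) * (z * (-Real.sin σ))) σ :=
        ((Real.hasDerivAt_cos σ).const_mul z).exp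
      have hP : HasDerivAt ψ (deriv ψ σ) σ :=
        ((hψ.differentiable (by simp)) σ).hasDerivAt
      have := (hE.fun_mul hP).deriv
      rw [this, hφdef]
      ring
    -- step 2
    rw [iteratedDeriv_succ', hderiv]
    -- step 4 : bounds on φ
    have hφbd : ∀ τ' : ℝ, ∀ j : ℕ, j ≤ n → |iteratedDeriv j φ τ'| ≤ z * ((2 ^ n + 1) * M) := by
      intro τ' j hj
      have hsplit : iteratedDeriv j φ τ' = iteratedDeriv j (deriv ψ) τ'
          - z * iteratedDeriv j (fun σ => Real.sin σ * ψ σ) τ' := by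
        rw [hφdef]
        rw [iter_sub hψ' (contDiff_const.mul (Real.contDiff_sin.mul hψ)) j τ',
          iter_const_mul z (Real.contDiff_sin.mul hψ) j τ']
      have h1 : |iteratedDeriv j (deriv ψ) τ'| ≤ M := by
        rw [← iteratedDeriv_succ']
        exact hbd τ' (j+1) (by omega)
      have h2 : |iteratedDeriv j (fun σ => Real.sin σ * ψ σ) τ'| ≤ 2 ^ n * M := by
        have hmul := norm_iteratedFDeriv_mul_le (𝕜 := ℝ)
          (Real.contDiff_sin.of_le (le_top)) hψ τ'
          (n := j) (N := (⊤ : ℕ∞)) (by exact_mod_cast le_top)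
        rw [norm_iteratedFDeriv_eq_norm_iteratedDeriv, Real.norm_eq_abs] at hmul
        refine hmul.trans ?_
        have hsum : ∑ i ∈ Finset.range (j + 1), (j.choose i : ℝ) *
            ‖iteratedFDeriv ℝ i Real.sin τ'‖ * ‖iteratedFDeriv ℝ (j - i) ψ τ'‖
            ≤ ∑ i ∈ Finset.range (j + 1), (j.choose i : ℝ) * M := by
          refine Finset.sum_le_sum fun i _ => ?_
          rw [norm_iteratedFDeriv_eq_norm_iteratedDeriv,
            norm_iteratedFDeriv_eq_norm_iteratedDeriv, Real.norm_eq_abs, Real.norm_eq_abs]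
          have := sin_iter_bound i τ'
          have hg := hbd τ' (j - i) (by omega)
          calc (j.choose i : ℝ) * |iteratedDeriv i Real.sin τ'| * |iteratedDeriv (j-i) ψ τ'|
              ≤ (j.choose i : ℝ) * 1 * M := by
                apply mul_le_mul _ hg (abs_nonneg _) (by positivity)
                apply mul_le_mul_of_nonneg_left this (by positivity)
            _ = (j.choose i : ℝ) * M := by ring
        refine hsum.trans ?_
        rw [← Finset.sum_mul]
        have : ∑ i ∈ Finset.range (j + 1), (j.choose i : ℝ) = 2 ^ j := by
          exact_mod_cast congrArg (Nat.cast : ℕ → ℝ) (Nat.sum_range_choose j)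
        rw [this]
        have : (2:ℝ) ^ j ≤ 2 ^ n := by
          exact pow_le_pow_right₀ one_le_two hj
        nlinarith
      rw [hsplit]
      calc |iteratedDeriv j (deriv ψ) τ' - z * iteratedDeriv j (fun σ => Real.sin σ * ψ σ) τ'|
          ≤ |iteratedDeriv j (deriv ψ) τ'| + |z| * |iteratedDeriv j (fun σ => Real.sin σ * ψ σ) τ'| := by
            rw [← abs_mul]; exact abs_sub _ _
        _ ≤ M + z * (2 ^ n * M) := by
            have : |z| = z := abs_of_pos hz0
            rw [this]
            exact add_le_add h1 (mul_le_mul_of_nonneg_left h2 hz0.le)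
        _ ≤ z * ((2 ^ n + 1) * M) := by nlinarith
    -- step 5 : apply IH
    have key := hC (z * ((2 ^ n + 1) * M)) (by positivity) φ hφ hφbd z hz τ
    calc |iteratedDeriv n (fun σ => Real.exp (z * Real.cos σ) * φ σ) τ|
        ≤ C * (z * ((2 ^ n + 1) * M)) * z ^ n * Real.exp (z * Real.cos τ) := key
      _ = C * (2 ^ n + 1) * M * z ^ (n + 1) * Real.exp (z * Real.cos τ) := by ring

/-- Derivative bound for the oscillatory exponential with a cutoff: for every `m : ℕ` and `M`,
there is a constant `C` (depending only on `m` and `M`) such that for every smooth `ψ : ℝ → ℝ`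
with `|ψ^{(j)}(τ)| ≤ M` for all `τ` and all `j ≤ 2m`, all `z ≥ 1` and all `τ`,
`|D^{2m}[σ ↦ e^{z cos σ} ψ(σ)](τ)| ≤ C z^{2m} e^{z cos τ}`. -/
theorem deriv_bound_oscillatory_exponential (m : ℕ) (M : ℝ) :
    ∃ C : ℝ, ∀ ψ : ℝ → ℝ, ContDiff ℝ (⊤ : ℕ∞) ψ →
      (∀ τ : ℝ, ∀ j : ℕ, j ≤ 2 * m → |iteratedDeriv j ψ τ| ≤ M) →
      ∀ z : ℝ, 1 ≤ z → ∀ τ : ℝ,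
        |iteratedDeriv (2 * m) (fun σ => Real.exp (z * Real.cos σ) * ψ σ) τ|
          ≤ C * z ^ (2 * m) * Real.exp (z * Real.cos τ) := by
  obtain ⟨C, hC0, hC⟩ := aux_bound (2 * m)
  refine ⟨C * max M 0, fun ψ hψ hbd z hz τ => ?_⟩
  have hbd' : ∀ τ : ℝ, ∀ j : ℕ, j ≤ 2 * m → |iteratedDeriv j ψ τ| ≤ max M 0 :=
    fun τ j hj => (hbd τ j hj).trans (le_max_left _ _)
  have := hC (max M 0) (le_max_right _ _) ψ (hψ.of_le (by simp)) hbd' z hz τ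
  linarith [this]
end

section
/- Derivative bound for the hyperbolic exponential: for every natural number m there is a constant C, depending only on m, such that for all z ≥ 1 and all τ ∈ ℝ, |D^{2m}[σ ↦ e^{-z cosh σ}](τ)| ≤ C z^{2m} e^{-(z/2) cosh τ}, where D^{2m}[f](τ) denotes the 2m-th derivative of f at τ. -/
/-!
The function extends to the entire function `w ↦ exp (-z cosh w)`. On the disc of radius `1/4`
around a real point `τ` one has `Re (cosh w) ≥ cosh τ / 2`, so Cauchy's estimate on the circle of
radius `1/(4z)` around `τ` bounds the `n`-th derivative by `n! (4z)ⁿ exp (-(z/2) cosh τ)`.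
-/

open Real

theorem Complex.cosh_re (w : ℂ) : (Complex.cosh w).re = Real.cosh w.re * Real.cos w.im := by
  conv_lhs => rw [← Complex.re_add_im w]
  rw [Complex.cosh_add, Complex.cosh_mul_I, Complex.sinh_mul_I]
  simp [Complex.cosh_ofReal_re, Complex.cos_ofReal_re]

theorem Real.exp_neg_abs_sub_mul_cosh_le (x y : ℝ) : exp (-|x - y|) * cosh y ≤ cosh x := by
  have h₁ : exp y * exp (-|x - y|) ≤ exp x := by
    rw [← exp_add]
    exact exp_le_exp.2 (by linarith [neg_abs_le (x - y)])
  have h₂ : exp (-y) * exp (-|x - y|) ≤ exp (-x) := by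
    rw [← exp_add]
    exact exp_le_exp.2 (by linarith [le_abs_self (x - y)])
  rw [cosh_eq, cosh_eq]
  linarith

theorem Complex.half_cosh_le_cosh_re {τ : ℝ} {w : ℂ} (hw : ‖w - τ‖ ≤ 1 / 4) :
    Real.cosh τ / 2 ≤ (Complex.cosh w).re := by
  have hre : |w.re - τ| ≤ 1 / 4 := by simpa using (Complex.abs_re_le_norm _).trans hw
  have him : |w.im| ≤ 1 / 4 := by simpa using (Complex.abs_im_le_norm _).trans hw
  have hexp : 3 / 4 ≤ Real.exp (-|w.re - τ|) := by linarith [Real.add_one_le_exp (-|w.re - τ|)]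
  have hcos : 31 / 32 ≤ Real.cos w.im := by
    nlinarith [one_sub_sq_div_two_le_cos (x := w.im), sq_abs w.im, abs_nonneg w.im]
  have hcosh : 3 / 4 * Real.cosh τ ≤ Real.cosh w.re :=
    le_trans (by gcongr) (exp_neg_abs_sub_mul_cosh_le w.re τ)
  rw [Complex.cosh_re]
  nlinarith [cosh_pos τ, mul_le_mul hcosh hcos (by norm_num) (cosh_pos _).le]

theorem norm_cexp_neg_mul_cosh_le {z τ : ℝ} (hz : 0 ≤ z) {w : ℂ} (hw : ‖w - τ‖ ≤ 1 / 4) :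
    ‖Complex.exp (-z * Complex.cosh w)‖ ≤ exp (-(z / 2) * cosh τ) := by
  rw [Complex.norm_exp, exp_le_exp]
  have := Complex.half_cosh_le_cosh_re hw
  simp only [neg_mul, Complex.neg_re, Complex.re_ofReal_mul]
  nlinarith

theorem deriv_apply_ofReal_of_forall_eq {F : ℂ → ℂ} {f : ℝ → ℝ} (hF : Differentiable ℂ F)
    (hFf : ∀ x : ℝ, F x = f x) (x : ℝ) : deriv F x = deriv f x := by
  have hf : HasDerivAt f (deriv F x).re x := by
    simpa [hFf] using (hF x).hasDerivAt.real_of_complex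
  have hofReal : HasDerivAt (fun y : ℝ => F y) ((deriv F x).re : ℂ) x := by
    simpa [hFf] using hf.ofReal_comp
  rw [hf.deriv]
  exact (hF x).hasDerivAt.comp_ofReal.unique hofReal

theorem iteratedDeriv_apply_ofReal_of_forall_eq {F : ℂ → ℂ} {f : ℝ → ℝ}
    (hF : Differentiable ℂ F) (hFf : ∀ x : ℝ, F x = f x) (n : ℕ) (x : ℝ) :
    iteratedDeriv n F x = iteratedDeriv n f x := by
  induction n generalizing F f with
  | zero => simpa using hFf x
  | succ n ih =>
    rw [iteratedDeriv_succ', iteratedDeriv_succ']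
    exact ih hF.deriv (deriv_apply_ofReal_of_forall_eq hF hFf)

theorem abs_iteratedDeriv_exp_neg_mul_cosh_le (n : ℕ) {z : ℝ} (hz : 1 ≤ z) (τ : ℝ) :
    |iteratedDeriv n (fun σ => exp (-z * cosh σ)) τ|
      ≤ n.factorial * (4 * z) ^ n * exp (-(z / 2) * cosh τ) := by
  have hz₀ : 0 < z := by linarith
  set F : ℂ → ℂ := fun w => Complex.exp (-z * Complex.cosh w)
  have hF : Differentiable ℂ F := (Complex.differentiable_cosh.const_mul _).cexp
  have hFf (x : ℝ) : F x = ↑(exp (-z * cosh x)) := by simp [F]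
  have hsphere : ∀ w ∈ Metric.sphere (τ : ℂ) (4 * z)⁻¹, ‖F w‖ ≤ exp (-(z / 2) * cosh τ) := by
    intro w hw
    refine norm_cexp_neg_mul_cosh_le hz₀.le ?_
    rw [← dist_eq_norm, Metric.mem_sphere.1 hw, one_div]
    gcongr
    linarith
  have hcauchy := Complex.norm_iteratedDeriv_le_of_forall_mem_sphere_norm_le n
    (by positivity) hF.diffContOnCl hsphere
  rw [iteratedDeriv_apply_ofReal_of_forall_eq hF hFf, Complex.norm_real, norm_eq_abs,
    inv_pow, div_inv_eq_mul] at hcauchy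
  linarith

/-- Derivative bound for the hyperbolic exponential: for every `m : ℕ` there is a constant `C`
(depending only on `m`) such that for all `z ≥ 1` and all `τ`,
`|D^{2m}[σ ↦ e^{-z cosh σ}](τ)| ≤ C z^{2m} e^{-(z/2) cosh τ}`. -/
theorem deriv_bound_hyperbolic_exponential (m : ℕ) :
    ∃ C : ℝ, ∀ z : ℝ, 1 ≤ z → ∀ τ : ℝ,
      |iteratedDeriv (2 * m) (fun σ => Real.exp (-z * Real.cosh σ)) τ|
        ≤ C * z ^ (2 * m) * Real.exp (-(z / 2) * Real.cosh τ) := by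
  refine ⟨(2 * m).factorial * 4 ^ (2 * m), fun z hz τ => ?_⟩
  calc _ ≤ _ := abs_iteratedDeriv_exp_neg_mul_cosh_le (2 * m) hz τ
    _ = _ := by rw [mul_pow]; ring
end

section
/- Summability with Gamma-factorial decay: let n ≥ 2 be an integer, c > 0, and let μ : ℕ → ℝ satisfy μ_k ≥ c(1+k)^{1/(n-1)} for all k. Then the series Σ_{k=0}^∞ (1+k)^{(n-2)/(n-1)} · 2^{-μ_k} / Γ(μ_k + 1/2) converges, where Γ is the real Gamma function. -/
open Real Filter Topology

/-!
Since `μ k ≥ c (1+k)^ε → ∞`, eventually `Γ(μ k + a) ≥ 1` and the `k`-th term is at most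
`(1+k)^p exp(-c log r · (1+k)^ε)`. Substituting `x = (1+k)^ε` turns this stretched exponential
into `x^s e^{-bx} → 0`, so the terms are eventually below `(1+k)^{-2}`.
-/

namespace Real

lemma one_le_Gamma_of_two_le {x : ℝ} (hx : 2 ≤ x) : 1 ≤ Gamma x :=
  Gamma_two ▸ Gamma_strictMonoOn_Ici.monotoneOn (Set.mem_Ici.2 le_rfl) hx hx

lemma tendsto_rpow_mul_exp_neg_mul_rpow_atTop_nhds_zero (s : ℝ) {b ε : ℝ} (hb : 0 < b)
    (hε : 0 < ε) : Tendsto (fun x : ℝ => x ^ s * exp (-b * x ^ ε)) atTop (𝓝 0) := by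
  refine ((tendsto_rpow_mul_exp_neg_mul_atTop_nhds_zero (s / ε) b hb).comp
    (tendsto_rpow_atTop hε)).congr' ?_
  filter_upwards [eventually_gt_atTop 0] with x hx
  simp only [Function.comp_apply, ← rpow_mul hx.le, mul_div_cancel₀ s hε.ne']

lemma summable_one_add_rpow_mul_exp_neg_mul_rpow (p : ℝ) {b ε : ℝ} (hb : 0 < b) (hε : 0 < ε) :
    Summable fun k : ℕ => (1 + k : ℝ) ^ p * exp (-b * (1 + k : ℝ) ^ ε) := by
  have hlim := (tendsto_rpow_mul_exp_neg_mul_rpow_atTop_nhds_zero (p + 2) hb hε).comp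
    (tendsto_atTop_add_const_left atTop 1 tendsto_natCast_atTop_atTop)
  have hsum : Summable fun k : ℕ => (1 + k : ℝ) ^ (-2 : ℝ) := by
    refine ((summable_nat_add_iff 1).2 (summable_nat_rpow.2 (by norm_num : (-2 : ℝ) < -1))).congr
      fun k => ?_
    push_cast
    rw [add_comm]
  refine hsum.of_norm_bounded_eventually_nat ?_
  filter_upwards [hlim.eventually_le_const one_pos] with k hk
  have hk1 : (0 : ℝ) < 1 + k := by positivity
  calc ‖(1 + k : ℝ) ^ p * exp (-b * (1 + k : ℝ) ^ ε)‖
      = (1 + k : ℝ) ^ (p + 2) * exp (-b * (1 + k : ℝ) ^ ε) * (1 + k : ℝ) ^ (-2 : ℝ) := by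
        rw [norm_of_nonneg (by positivity), mul_right_comm, ← rpow_add hk1, add_neg_cancel_right]
    _ ≤ (1 + k : ℝ) ^ (-2 : ℝ) := mul_le_of_le_one_left (by positivity) hk

end Real

theorem summable_rpow_mul_rpow_neg_div_Gamma {c ε r : ℝ} (hc : 0 < c) (hε : 0 < ε) (hr : 1 < r)
    (p a : ℝ) {μ : ℕ → ℝ} (hμ : ∀ k : ℕ, c * (1 + k : ℝ) ^ ε ≤ μ k) :
    Summable fun k : ℕ => (1 + k : ℝ) ^ p * r ^ (-μ k) / Gamma (μ k + a) := by
  have hμ_top : Tendsto μ atTop atTop :=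
    tendsto_atTop_mono hμ <| ((tendsto_rpow_atTop hε).comp
      (tendsto_atTop_add_const_left atTop 1 tendsto_natCast_atTop_atTop)).const_mul_atTop hc
  have hlog : 0 < log r := log_pos hr
  refine (summable_one_add_rpow_mul_exp_neg_mul_rpow p (mul_pos hc hlog) hε
    ).of_norm_bounded_eventually_nat ?_
  filter_upwards [hμ_top.eventually_ge_atTop (2 - a)] with k hk
  have hΓ : 1 ≤ Gamma (μ k + a) := one_le_Gamma_of_two_le (by linarith)
  have hpow : r ^ (-μ k) ≤ exp (-(c * log r) * (1 + k : ℝ) ^ ε) := by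
    rw [rpow_def_of_pos (zero_lt_one.trans hr)]
    exact exp_le_exp.2 (by nlinarith [hμ k])
  rw [norm_of_nonneg (div_nonneg (by positivity) (zero_le_one.trans hΓ))]
  calc (1 + k : ℝ) ^ p * r ^ (-μ k) / Gamma (μ k + a)
      ≤ (1 + k : ℝ) ^ p * r ^ (-μ k) := div_le_self (by positivity) hΓ
    _ ≤ (1 + k : ℝ) ^ p * exp (-(c * log r) * (1 + k : ℝ) ^ ε) :=
      mul_le_mul_of_nonneg_left hpow (by positivity)

/-- Summability with Gamma-factorial decay: for an integer `n ≥ 2`, `c > 0` and `μ : ℕ → ℝ`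
with `μ_k ≥ c(1+k)^{1/(n-1)}` for all `k`, the series
`Σ_k (1+k)^{(n-2)/(n-1)} 2^{-μ_k} / Γ(μ_k + 1/2)` converges. -/
theorem summable_gamma_factorial_decay
    (n : ℕ) (hn : 2 ≤ n) (c : ℝ) (hc : 0 < c) (μ : ℕ → ℝ)
    (hμ : ∀ k : ℕ, c * (1 + (k : ℝ)) ^ ((1 : ℝ) / ((n : ℝ) - 1)) ≤ μ k) :
    Summable (fun k : ℕ =>
      (1 + (k : ℝ)) ^ (((n : ℝ) - 2) / ((n : ℝ) - 1)) * (2 : ℝ) ^ (-μ k) /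
        Real.Gamma (μ k + 1 / 2)) := by
  have hn1 : (0 : ℝ) < n - 1 := by
    have : (2 : ℝ) ≤ n := by exact_mod_cast hn
    linarith
  exact summable_rpow_mul_rpow_neg_div_Gamma hc (one_div_pos.2 hn1) one_lt_two _ _ hμ
end

section
/- Small-argument bound for weighted sums of modified Bessel functions (abstract form of the first part of the key lemma): let n ≥ 2 be an integer, μ₀ > 0, c > 0, A > 0, let μ : ℕ → ℝ satisfy μ_k ≥ μ₀ and μ_k ≥ c(1+k)^{1/(n-1)} for all k, and let H : ℕ → ℂ satisfy |H_k| ≤ A(1+k)^{(n-2)/(n-1)} for all k. Then there is a constant C, depending only on n, μ₀, c and A, such that for every 0 < z ≤ 1 the series Σ_{k=0}^∞ H_k I_{μ_k}(z) converges absolutely and z^{-(n-2)/2} |Σ_{k=0}^∞ H_k I_{μ_k}(z)| ≤ C z^{μ₀ - (n-2)/2}. -/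
open Real MeasureTheory

/-- Modified Bessel function of the first kind of order `μ`, defined by its power series. -/
noncomputable def besselI (μ z : ℝ) : ℝ :=
  ∑' j : ℕ, (1 / (j.factorial * Real.Gamma (μ + j + 1))) * (z / 2) ^ (μ + 2 * j)

lemma aux_pow_le_exp {x : ℝ} (hx : 0 ≤ x) (N : ℕ) : x ^ N / N.factorial ≤ Real.exp x := by
  calc x ^ N / N.factorial
      ≤ ∑ i ∈ Finset.range (N+1), x ^ i / i.factorial :=
        Finset.single_le_sum (f := fun i => x ^ i / (i.factorial : ℝ))
          (fun i _ => by positivity) (Finset.self_mem_range_succ N)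
    _ ≤ Real.exp x := Real.sum_le_exp_of_nonneg hx _

lemma aux_one_le_Gamma {x : ℝ} (hx : 2 ≤ x) : 1 ≤ Real.Gamma x := by
  have := Real.Gamma_strictMonoOn_Ici.monotoneOn (by norm_num : (2:ℝ) ∈ Set.Ici 2) hx hx
  rwa [Real.Gamma_two] at this

lemma aux_Gamma_lower {μ : ℝ} (hμ : 0 < μ) (j : ℕ) :
    (j.factorial : ℝ) / (μ + 1) ≤ Real.Gamma (μ + j + 1) := by
  induction j with
  | zero =>
      have h2 : 1 ≤ Real.Gamma (μ + 2) := aux_one_le_Gamma (by linarith)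
      have h3 : Real.Gamma (μ + 1 + 1) = (μ + 1) * Real.Gamma (μ + 1) :=
        Real.Gamma_add_one (by positivity)
      have h4 : (μ:ℝ) + 1 + 1 = μ + 2 := by ring
      rw [h4] at h3
      have hpos : (0:ℝ) < μ + 1 := by linarith
      simp only [Nat.factorial_zero, Nat.cast_one, Nat.cast_zero, add_zero]
      rw [div_le_iff₀ hpos]
      nlinarith [h3, h2]
  | succ j ih =>
      have h3 : Real.Gamma (μ + j + 1 + 1) = (μ + j + 1) * Real.Gamma (μ + j + 1) :=
        Real.Gamma_add_one (by positivity)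
      have h4 : μ + (j+1:ℕ) + 1 = μ + j + 1 + 1 := by push_cast; ring
      rw [h4, h3]
      have hfac : ((j+1).factorial : ℝ) = (j+1) * j.factorial := by
        push_cast [Nat.factorial_succ]; ring
      rw [hfac]
      have h5 : (j:ℝ) + 1 ≤ μ + j + 1 := by linarith
      have h6 : (0:ℝ) ≤ (j.factorial:ℝ) / (μ+1) := by positivity
      calc ((j:ℝ)+1) * j.factorial / (μ+1) = ((j:ℝ)+1) * ((j.factorial:ℝ)/(μ+1)) := by ring
        _ ≤ (μ + j + 1) * Real.Gamma (μ + j + 1) := by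
            apply mul_le_mul h5 ih h6 (by positivity)

lemma aux_mu_le {μ : ℝ} (hμ : 0 ≤ μ) : μ + 1 ≤ 4 * (2:ℝ) ^ (μ/2) := by
  have h2 : (2:ℝ)^(μ/2) = Real.exp (μ/2 * Real.log 2) := by
    rw [Real.rpow_def_of_pos two_pos]; ring_nf
  have h1 : μ/2 * Real.log 2 + 1 ≤ Real.exp (μ/2 * Real.log 2) := Real.add_one_le_exp _
  have hl : (0.6931471803 : ℝ) < Real.log 2 := Real.log_two_gt_d9
  rw [h2]
  nlinarith [h1, hl, hμ]

section
variable {μ z : ℝ}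

lemma aux_term_nonneg (hμ : 0 < μ) (hz : 0 < z) (j : ℕ) :
    0 ≤ (1 / (j.factorial * Real.Gamma (μ + j + 1))) * (z / 2) ^ (μ + 2 * j) := by
  have hG : 0 < Real.Gamma (μ + j + 1) := Real.Gamma_pos_of_pos (by positivity)
  have : (0:ℝ) < z / 2 := by positivity
  positivity

lemma aux_term_le (hμ : 0 < μ) (hz : 0 < z) (hz1 : z ≤ 1) (j : ℕ) :
    (1 / (j.factorial * Real.Gamma (μ + j + 1))) * (z / 2) ^ (μ + 2 * j)
      ≤ (μ + 1) * (z/2) ^ μ * (1/4 : ℝ) ^ j := by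
  have hG : 0 < Real.Gamma (μ + j + 1) := Real.Gamma_pos_of_pos (by positivity)
  have hF : (1:ℝ) ≤ j.factorial := by exact_mod_cast Nat.one_le_iff_ne_zero.mpr j.factorial_ne_zero
  have hlow := aux_Gamma_lower hμ j
  have hco : 1 / ((j.factorial:ℝ) * Real.Gamma (μ + j + 1)) ≤ μ + 1 := by
    have hpos : (0:ℝ) < (j.factorial:ℝ) * Real.Gamma (μ + j + 1) := by positivity
    rw [div_le_iff₀ hpos]
    have h1 : (j.factorial:ℝ) / (μ+1) ≤ Real.Gamma (μ + j + 1) := hlow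
    have hμ1 : (0:ℝ) < μ + 1 := by linarith
    rw [div_le_iff₀ hμ1] at h1
    nlinarith [hF, hG, h1]
  have hzp : (0:ℝ) < z / 2 := by positivity
  have hpow : (z/2) ^ (μ + 2 * j) ≤ (z/2) ^ μ * (1/4 : ℝ) ^ j := by
    have h1 : (z/2) ^ (μ + 2 * (j:ℝ)) = (z/2)^μ * (z/2) ^ (2*(j:ℝ)) := Real.rpow_add hzp _ _
    have h2 : (z/2) ^ (2*(j:ℝ)) = ((z/2)^2 : ℝ) ^ j := by
      rw [show (2*(j:ℝ)) = ((2*j : ℕ) : ℝ) by push_cast; ring, Real.rpow_natCast, pow_mul]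
    have h3 : ((z/2)^2 : ℝ) ^ j ≤ (1/4 : ℝ) ^ j := by
      apply pow_le_pow_left₀ (by positivity)
      nlinarith
    calc (z/2) ^ (μ + 2 * (j:ℝ)) = (z/2)^μ * ((z/2)^2 : ℝ) ^ j := by rw [h1, h2]
      _ ≤ (z/2)^μ * (1/4 : ℝ) ^ j := by
          apply mul_le_mul_of_nonneg_left h3 (Real.rpow_nonneg hzp.le μ)
  calc (1 / ((j.factorial:ℝ) * Real.Gamma (μ + j + 1))) * (z / 2) ^ (μ + 2 * j)
      ≤ (μ + 1) * ((z/2) ^ μ * (1/4 : ℝ) ^ j) := by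
        apply mul_le_mul hco hpow (Real.rpow_nonneg hzp.le _) (by linarith)
    _ = (μ + 1) * (z/2) ^ μ * (1/4 : ℝ) ^ j := by ring

lemma aux_bessel_summable (hμ : 0 < μ) (hz : 0 < z) (hz1 : z ≤ 1) :
    Summable (fun j : ℕ => (1 / (j.factorial * Real.Gamma (μ + j + 1))) * (z / 2) ^ (μ + 2 * j)) := by
  apply Summable.of_nonneg_of_le (aux_term_nonneg hμ hz) (aux_term_le hμ hz hz1)
  exact (summable_geometric_of_lt_one (by norm_num) (by norm_num)).mul_left _

lemma aux_bessel_nonneg (hμ : 0 < μ) (hz : 0 < z) : 0 ≤ besselI μ z :=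
  tsum_nonneg (aux_term_nonneg hμ hz)

lemma aux_bessel_le (hμ : 0 < μ) (hz : 0 < z) (hz1 : z ≤ 1) :
    besselI μ z ≤ 2 * (μ + 1) * (z/2) ^ μ := by
  have hg : Summable (fun j : ℕ => (μ + 1) * (z/2) ^ μ * (1/4 : ℝ) ^ j) :=
    (summable_geometric_of_lt_one (by norm_num) (by norm_num)).mul_left _
  have h := Summable.tsum_le_tsum (aux_term_le hμ hz hz1) (aux_bessel_summable hμ hz hz1) hg
  rw [tsum_mul_left, tsum_geometric_of_lt_one (by norm_num) (by norm_num)] at h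
  refine h.trans ?_
  have : (0:ℝ) ≤ (μ+1) * (z/2)^μ := by
    have := Real.rpow_nonneg (by positivity : (0:ℝ) ≤ z/2) μ
    nlinarith
  rw [show ((1:ℝ) - 1/4)⁻¹ = 4/3 by norm_num]
  nlinarith

end

lemma aux_summable (α β b : ℝ) (hβ : 0 < β) (hb : 0 < b) :
    Summable (fun k : ℕ => (1+(k:ℝ))^α * Real.exp (-(b * (1+(k:ℝ))^β))) := by
  set N := ⌈(α+2)/β⌉₊ with hN
  have hNβ : α + 2 ≤ N * β := by
    have := Nat.le_ceil ((α+2)/β)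
    rw [div_le_iff₀ hβ] at this
    linarith
  have hbound : ∀ k : ℕ, (1+(k:ℝ))^α * Real.exp (-(b * (1+(k:ℝ))^β))
      ≤ (N.factorial / b^N) * (1+(k:ℝ))^(-2:ℝ) := by
    intro k
    set m : ℝ := 1 + (k:ℝ) with hm
    have hm1 : (1:ℝ) ≤ m := le_add_of_nonneg_right (Nat.cast_nonneg k)
    have hm0 : (0:ℝ) < m := by linarith
    have hx0 : (0:ℝ) ≤ b * m^β := by positivity
    have h1 : (b * m^β)^N / N.factorial ≤ Real.exp (b * m^β) := aux_pow_le_exp hx0 N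
    have h2 : (b * m^β)^N = b^N * m^(β*N) := by
      rw [mul_pow, ← Real.rpow_natCast (m^β) N, ← Real.rpow_mul hm0.le]
    have h3 : m^(α+2) ≤ m^(β*N) := by
      apply Real.rpow_le_rpow_of_exponent_le hm1
      rw [mul_comm]; exact hNβ
    have h4 : b^N * m^(α+2) / N.factorial ≤ Real.exp (b * m^β) := by
      refine le_trans ?_ h1
      rw [h2]
      gcongr
    have hexp : Real.exp (-(b * m^β)) ≤ N.factorial / (b^N * m^(α+2)) := by
      rw [Real.exp_neg]
      have hpos : (0:ℝ) < b^N * m^(α+2) / N.factorial := by positivity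
      have := inv_anti₀ hpos h4
      rwa [inv_div] at this
    calc m^α * Real.exp (-(b * m^β)) ≤ m^α * (N.factorial / (b^N * m^(α+2))) := by
          apply mul_le_mul_of_nonneg_left hexp (Real.rpow_nonneg hm0.le α)
      _ = (N.factorial / b^N) * (m^α / m^(α+2)) := by ring
      _ = (N.factorial / b^N) * m^(-2:ℝ) := by
          rw [← Real.rpow_sub hm0]; norm_num
  apply Summable.of_nonneg_of_le (fun k => by positivity) hbound
  apply Summable.mul_left
  have h5 : Summable (fun n : ℕ => (n:ℝ)^(-2:ℝ)) := Real.summable_nat_rpow.mpr (by norm_num)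
  have h6 := h5.comp_injective Nat.succ_injective
  refine h6.congr fun k => ?_
  simp [Function.comp, Nat.succ_eq_add_one]
  norm_num [add_comm]

/-- Small-argument bound for weighted sums of modified Bessel functions: for an integer `n ≥ 2`,
`μ₀ > 0`, `c > 0`, `A > 0`, there is a constant `C` (depending only on `n`, `μ₀`, `c`, `A`)
such that for every `μ : ℕ → ℝ` with `μ_k ≥ μ₀` and `μ_k ≥ c(1+k)^{1/(n-1)}`, every
`H : ℕ → ℂ` with `|H_k| ≤ A(1+k)^{(n-2)/(n-1)}`, and every `0 < z ≤ 1`, the series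
`Σ_k H_k I_{μ_k}(z)` converges absolutely and
`z^{-(n-2)/2} |Σ_k H_k I_{μ_k}(z)| ≤ C z^{μ₀ - (n-2)/2}`. -/
theorem small_argument_bessel_sum_bound
    (n : ℕ) (hn : 2 ≤ n) (μ₀ c A : ℝ) (hμ₀ : 0 < μ₀) (hc : 0 < c) (hA : 0 < A) :
    ∃ C : ℝ, ∀ μ : ℕ → ℝ, (∀ k : ℕ, μ₀ ≤ μ k) →
      (∀ k : ℕ, c * (1 + (k : ℝ)) ^ ((1 : ℝ) / ((n : ℝ) - 1)) ≤ μ k) →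
      ∀ H : ℕ → ℂ,
      (∀ k : ℕ, ‖H k‖ ≤ A * (1 + (k : ℝ)) ^ (((n : ℝ) - 2) / ((n : ℝ) - 1))) →
      ∀ z : ℝ, 0 < z → z ≤ 1 →
        Summable (fun k : ℕ => ‖H k * (besselI (μ k) z : ℂ)‖) ∧
        z ^ (-(((n : ℝ) - 2) / 2)) * ‖∑' k : ℕ, H k * (besselI (μ k) z : ℂ)‖
          ≤ C * z ^ (μ₀ - ((n : ℝ) - 2) / 2) := by
  have hn2 : (2:ℝ) ≤ (n:ℝ) := by exact_mod_cast hn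
  have hn1 : (0:ℝ) < (n:ℝ) - 1 := by linarith
  set β := (1:ℝ)/((n:ℝ)-1) with hβdef
  set α := ((n:ℝ)-2)/((n:ℝ)-1) with hαdef
  have hβ : 0 < β := by rw [hβdef]; positivity
  set b := c/2 * Real.log 2 with hbdef
  have hb : 0 < b := by
    have := Real.log_pos one_lt_two
    rw [hbdef]; positivity
  have hf := aux_summable α β b hβ hb
  set S := ∑' k : ℕ, (1+(k:ℝ))^α * Real.exp (-(b*(1+(k:ℝ))^β)) with hSdef
  have hS : 0 ≤ S := tsum_nonneg fun k => by positivity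
  refine ⟨8*A*S, ?_⟩
  intro μ hμ1 hμ2 H hH z hz hz1
  have key : ∀ k : ℕ, ‖H k * (besselI (μ k) z : ℂ)‖
      ≤ (8*A*z^μ₀) * ((1+(k:ℝ))^α * Real.exp (-(b*(1+(k:ℝ))^β))) := by
    intro k
    have hμk0 : 0 < μ k := lt_of_lt_of_le hμ₀ (hμ1 k)
    have hB1 : besselI (μ k) z ≤ 2*(μ k + 1)*(z/2)^(μ k) := aux_bessel_le hμk0 hz hz1
    have hB0 : 0 ≤ besselI (μ k) z := aux_bessel_nonneg hμk0 hz
    have e1 : (z/2)^(μ k) = z^(μ k) * (2:ℝ)^(-(μ k)) := by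
      rw [Real.div_rpow hz.le (by norm_num), Real.rpow_neg (by norm_num), div_eq_mul_inv]
    have e2 : z^(μ k) ≤ z^μ₀ := Real.rpow_le_rpow_of_exponent_ge hz hz1 (hμ1 k)
    have e3 : (μ k + 1) * (2:ℝ)^(-(μ k)) ≤ 4 * (2:ℝ)^(-(μ k/2)) := by
      calc (μ k + 1) * (2:ℝ)^(-(μ k)) ≤ (4*(2:ℝ)^(μ k/2)) * (2:ℝ)^(-(μ k)) :=
            mul_le_mul_of_nonneg_right (aux_mu_le hμk0.le) (Real.rpow_nonneg (by norm_num) _)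
        _ = 4 * (2:ℝ)^(-(μ k/2)) := by
            rw [mul_assoc, ← Real.rpow_add two_pos, show μ k/2 + -(μ k) = -(μ k/2) by ring]
    have e4 : (2:ℝ)^(-(μ k/2)) ≤ Real.exp (-(b*(1+(k:ℝ))^β)) := by
      have h1 : c*(1+(k:ℝ))^β ≤ μ k := hμ2 k
      rw [Real.rpow_def_of_pos two_pos, Real.exp_le_exp, hbdef]
      have hl : 0 < Real.log 2 := Real.log_pos one_lt_two
      nlinarith [mul_le_mul_of_nonneg_left h1 hl.le]
    have hnorm : ‖H k * (besselI (μ k) z : ℂ)‖ = ‖H k‖ * besselI (μ k) z := by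
      rw [norm_mul, Complex.norm_real, Real.norm_eq_abs, abs_of_nonneg hB0]
    rw [hnorm]
    have hbig : besselI (μ k) z ≤ 8 * z^μ₀ * Real.exp (-(b*(1+(k:ℝ))^β)) := by
      have hzz : (0:ℝ) ≤ z^(μ k) := Real.rpow_nonneg hz.le _
      have h5 : (0:ℝ) ≤ (2:ℝ)^(-(μ k)) := Real.rpow_nonneg (by norm_num) _
      calc besselI (μ k) z ≤ 2*(μ k + 1)*(z/2)^(μ k) := hB1
        _ = 2*((μ k+1) * (2:ℝ)^(-(μ k))) * z^(μ k) := by rw [e1]; ring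
        _ ≤ 2*(4*(2:ℝ)^(-(μ k/2))) * z^μ₀ := by
            apply mul_le_mul (by nlinarith [e3]) e2 hzz
            positivity
        _ ≤ 2*(4*Real.exp (-(b*(1+(k:ℝ))^β))) * z^μ₀ := by
            have hz0 : (0:ℝ) ≤ z^μ₀ := Real.rpow_nonneg hz.le _
            apply mul_le_mul_of_nonneg_right _ hz0
            nlinarith [e4]
        _ = 8 * z^μ₀ * Real.exp (-(b*(1+(k:ℝ))^β)) := by ring
    calc ‖H k‖ * besselI (μ k) z
        ≤ (A*(1+(k:ℝ))^α) * (8*z^μ₀*Real.exp (-(b*(1+(k:ℝ))^β))) :=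
          mul_le_mul (hH k) hbig hB0 (by positivity)
      _ = (8*A*z^μ₀) * ((1+(k:ℝ))^α * Real.exp (-(b*(1+(k:ℝ))^β))) := by ring
  have hsum : Summable (fun k : ℕ => ‖H k * (besselI (μ k) z : ℂ)‖) :=
    Summable.of_nonneg_of_le (fun k => norm_nonneg _) key (hf.mul_left _)
  refine ⟨hsum, ?_⟩
  have htsum : ‖∑' k : ℕ, H k * (besselI (μ k) z : ℂ)‖ ≤ (8*A*z^μ₀) * S := by
    calc ‖∑' k : ℕ, H k * (besselI (μ k) z : ℂ)‖
        ≤ ∑' k : ℕ, ‖H k * (besselI (μ k) z : ℂ)‖ := norm_tsum_le_tsum_norm hsum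
      _ ≤ ∑' k : ℕ, (8*A*z^μ₀) * ((1+(k:ℝ))^α * Real.exp (-(b*(1+(k:ℝ))^β))) :=
          Summable.tsum_le_tsum key hsum (hf.mul_left _)
      _ = (8*A*z^μ₀) * S := by rw [hSdef, tsum_mul_left]
  have hzp : (0:ℝ) < z ^ (-(((n:ℝ)-2)/2)) := Real.rpow_pos_of_pos hz _
  calc z ^ (-(((n:ℝ)-2)/2)) * ‖∑' k : ℕ, H k * (besselI (μ k) z : ℂ)‖
      ≤ z ^ (-(((n:ℝ)-2)/2)) * ((8*A*z^μ₀)*S) := mul_le_mul_of_nonneg_left htsum hzp.le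
    _ = (8*A*S) * (z^μ₀ * z^(-(((n:ℝ)-2)/2))) := by ring
    _ = (8*A*S) * z^(μ₀ - ((n:ℝ)-2)/2) := by
        rw [← Real.rpow_add hz, ← sub_eq_add_neg]
end

section
/- Two integral bounds used in the intermediate-angle regime (corrected form of the lemma for ε₀/2 ≤ δ ≤ π): for every natural number m there is a constant C, depending only on m, such that for all z ≥ 1 and all δ ∈ [0, π]: (i) for every real μ, |∫_δ^π D^{2m}[σ ↦ e^{z(cos σ − cos δ)}](τ) cos(τμ) dτ| ≤ C z^{2m}; and (ii) for every μ ≥ 0, |∫₀^∞ D^{2m}[σ ↦ e^{-z(cosh σ + cos δ)}](τ) e^{-τμ} dτ| ≤ C z^{2m} e^{-z(cos δ + 1/2)}, where D^{2m}[f](τ) denotes the 2m-th derivative of f at τ. -/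
/-!
Both integrands are derivatives of `exp ∘ φ`, and the Faà di Bruno bound
`norm_iteratedFDeriv_comp_le` gives `|D^n (exp ∘ φ)| ≤ n! e^φ D^n` as soon as `|φ^(i)| ≤ D` for
`1 ≤ i ≤ n`. For `φ = z (cos σ - cos δ)` one can take `D = z`, and `e^φ ≤ 1` on `[δ, π]`. For
`φ = -z (cosh σ + c)` one can take `D = z e^τ`; since `cosh τ ≥ 1 + τ²/2`, the factor
`e^(-z cosh τ) e^(nτ)` is at most `e^(n² - 1/2 - z/2)` times the Gaussian `e^(-τ²/4)`, whose
integral over `(0, ∞)` is `√π`.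
-/

open Real MeasureTheory Set
open scoped Nat

theorem abs_iteratedDeriv_exp_comp_le {n : ℕ} {f : ℝ → ℝ} (hf : ContDiff ℝ n f) (x : ℝ) {D : ℝ}
    (hD : 1 ≤ D) (hfD : ∀ i, 1 ≤ i → i ≤ n → |iteratedDeriv i f x| ≤ D) :
    |iteratedDeriv n (fun y => exp (f y)) x| ≤ n ! * exp (f x) * D ^ n := by
  have hexp (i : ℕ) : ‖iteratedFDeriv ℝ i exp (f x)‖ = exp (f x) := by
    rw [norm_iteratedFDeriv_eq_norm_iteratedDeriv, iteratedDeriv_eq_iterate, iter_deriv_exp,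
      norm_of_nonneg (exp_pos _).le]
  have := norm_iteratedFDeriv_comp_le contDiff_exp hf le_rfl x (fun i _ => (hexp i).le)
    fun i hi _ => by
      rw [norm_iteratedFDeriv_eq_norm_iteratedDeriv]
      exact (hfD i hi ‹_›).trans (le_self_pow₀ hD (by omega))
  rwa [norm_iteratedFDeriv_eq_norm_iteratedDeriv] at this

theorem abs_sinh_le_cosh (x : ℝ) : |sinh x| ≤ cosh x :=
  abs_le.2 ⟨neg_le.1 (by simpa using (sinh_lt_cosh (-x)).le), (sinh_lt_cosh x).le⟩

theorem cosh_le_exp_of_nonneg {x : ℝ} (hx : 0 ≤ x) : cosh x ≤ exp x := by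
  rw [← cosh_add_sinh]
  exact le_add_of_nonneg_right (sinh_nonneg_iff.2 hx)

theorem one_add_sq_div_two_le_cosh {x : ℝ} (hx : 0 ≤ x) : 1 + x ^ 2 / 2 ≤ cosh x := by
  have hsinh : x / 2 ≤ sinh (x / 2) := self_le_sinh_iff.2 (by positivity)
  calc 1 + x ^ 2 / 2 = 1 + 2 * (x / 2) ^ 2 := by ring
    _ ≤ 1 + 2 * sinh (x / 2) ^ 2 := by gcongr
    _ = cosh (2 * (x / 2)) := by rw [cosh_two_mul, cosh_sq]; ring
    _ = cosh x := by ring_nf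

theorem abs_iteratedDeriv_cosh_le_cosh (n : ℕ) (x : ℝ) : |iteratedDeriv n cosh x| ≤ cosh x :=
  match n with
  | 0 => by simp [abs_of_pos (cosh_pos x)]
  | 1 => by simpa using abs_sinh_le_cosh x
  | n + 2 => by simpa using abs_iteratedDeriv_cosh_le_cosh n x

theorem iteratedDeriv_const_mul_cos_sub {i : ℕ} (hi : 1 ≤ i) (a c x : ℝ) :
    iteratedDeriv i (fun σ => a * (cos σ - c)) x = a * iteratedDeriv i cos x := by
  rw [iteratedDeriv_const_mul_field, iteratedDeriv_fun_sub (by fun_prop) (by fun_prop)]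
  simp [iteratedDeriv_const, Nat.one_le_iff_ne_zero.1 hi]

theorem iteratedDeriv_const_mul_cosh_add {i : ℕ} (hi : 1 ≤ i) (a c x : ℝ) :
    iteratedDeriv i (fun σ => a * (cosh σ + c)) x = a * iteratedDeriv i cosh x := by
  rw [iteratedDeriv_const_mul_field, iteratedDeriv_fun_add (by fun_prop) (by fun_prop)]
  simp [iteratedDeriv_const, Nat.one_le_iff_ne_zero.1 hi]

theorem abs_iteratedDeriv_exp_mul_cos_sub_le (n : ℕ) {z c τ : ℝ} (hz : 1 ≤ z) (hτ : cos τ ≤ c) :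
    |iteratedDeriv n (fun σ => exp (z * (cos σ - c))) τ| ≤ n ! * z ^ n := by
  have hz0 : 0 ≤ z := zero_le_one.trans hz
  calc _ ≤ n ! * exp (z * (cos τ - c)) * z ^ n :=
        abs_iteratedDeriv_exp_comp_le (by fun_prop) τ hz fun i hi _ => by
          rw [iteratedDeriv_const_mul_cos_sub hi, abs_mul, abs_of_nonneg hz0]
          exact mul_le_of_le_one_right hz0 (abs_iteratedDeriv_cos_le_one i τ)
    _ ≤ n ! * 1 * z ^ n := by
        gcongr
        exact exp_le_one_iff.2 (mul_nonpos_of_nonneg_of_nonpos hz0 (by linarith))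
    _ = n ! * z ^ n := by rw [mul_one]

theorem abs_intervalIntegral_iteratedDeriv_exp_mul_cos_sub_mul_le (n : ℕ) {z δ : ℝ} (hz : 1 ≤ z)
    (hδ : δ ∈ Icc 0 π) {g : ℝ → ℝ} (hg : ∀ τ, |g τ| ≤ 1) :
    |∫ τ in δ..π, iteratedDeriv n (fun σ => exp (z * (cos σ - cos δ))) τ * g τ| ≤
      n ! * π * z ^ n := by
  have hbound : ∀ τ ∈ uIoc δ π,
      ‖iteratedDeriv n (fun σ => exp (z * (cos σ - cos δ))) τ * g τ‖ ≤ n ! * z ^ n := by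
    intro τ hτ
    rw [uIoc_of_le hδ.2] at hτ
    rw [norm_mul, ← mul_one ((n ! : ℝ) * z ^ n)]
    exact mul_le_mul (abs_iteratedDeriv_exp_mul_cos_sub_le n hz
      (cos_le_cos_of_nonneg_of_le_pi hδ.1 hτ.2 hτ.1.le)) (hg τ) (norm_nonneg _) (by positivity)
  calc _ ≤ n ! * z ^ n * |π - δ| := intervalIntegral.norm_integral_le_of_norm_le_const hbound
    _ ≤ n ! * z ^ n * π := by
        gcongr
        rw [abs_of_nonneg (sub_nonneg.2 hδ.2)]
        linarith [hδ.1]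
    _ = n ! * π * z ^ n := by ring

theorem neg_mul_cosh_add_mul_le {z τ : ℝ} (hz : 1 ≤ z) (hτ : 0 ≤ τ) (a : ℝ) :
    -z * cosh τ + a * τ ≤ a ^ 2 - 1 / 2 - z / 2 - τ ^ 2 / 4 := by
  have := mul_le_mul_of_nonneg_left (one_add_sq_div_two_le_cosh hτ) (zero_le_one.trans hz)
  nlinarith [sq_nonneg (τ / 2 - a), mul_nonneg (sub_nonneg.2 hz) (sq_nonneg τ)]

theorem abs_iteratedDeriv_exp_neg_mul_cosh_add_le (n : ℕ) {z τ : ℝ} (hz : 1 ≤ z) (hτ : 0 ≤ τ)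
    (c : ℝ) :
    |iteratedDeriv n (fun σ => exp (-z * (cosh σ + c))) τ| ≤
      n ! * exp (n ^ 2 - 1 / 2) * z ^ n * exp (-z * (c + 1 / 2)) * exp (-(1 / 4) * τ ^ 2) := by
  have hz0 : 0 ≤ z := zero_le_one.trans hz
  calc _ ≤ n ! * exp (-z * (cosh τ + c)) * (z * exp τ) ^ n :=
        abs_iteratedDeriv_exp_comp_le (by fun_prop) τ
          (one_le_mul_of_one_le_of_one_le hz (one_le_exp hτ)) fun i hi _ => by
          rw [iteratedDeriv_const_mul_cosh_add hi, abs_mul, abs_neg, abs_of_nonneg hz0]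
          exact mul_le_mul_of_nonneg_left
            ((abs_iteratedDeriv_cosh_le_cosh i τ).trans (cosh_le_exp_of_nonneg hτ)) hz0
    _ = n ! * z ^ n * exp (-z * cosh τ + n * τ - z * c) := by
        rw [mul_pow, ← exp_nat_mul,
          show -z * cosh τ + n * τ - z * c = -z * (cosh τ + c) + n * τ by ring, exp_add]
        ring
    _ ≤ n ! * z ^ n * exp (n ^ 2 - 1 / 2 - z / 2 - τ ^ 2 / 4 - z * c) := by
        gcongr
        exact neg_mul_cosh_add_mul_le hz hτ n
    _ = _ := by
        rw [show (n : ℝ) ^ 2 - 1 / 2 - z / 2 - τ ^ 2 / 4 - z * c =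
          (n ^ 2 - 1 / 2) + -z * (c + 1 / 2) + -(1 / 4) * τ ^ 2 by ring, exp_add, exp_add]
        ring

theorem abs_setIntegral_Ioi_iteratedDeriv_exp_neg_mul_cosh_add_mul_le (n : ℕ) {z : ℝ} (hz : 1 ≤ z)
    (c : ℝ) {g : ℝ → ℝ} (hg : ∀ τ ∈ Ioi 0, |g τ| ≤ 1) :
    |∫ τ in Ioi 0, iteratedDeriv n (fun σ => exp (-z * (cosh σ + c))) τ * g τ| ≤
      n ! * exp (n ^ 2 - 1 / 2) * √π * z ^ n * exp (-z * (c + 1 / 2)) := by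
  set K : ℝ := n ! * exp (n ^ 2 - 1 / 2) * z ^ n * exp (-z * (c + 1 / 2))
  have hbound : ∀ τ ∈ Ioi (0 : ℝ),
      ‖iteratedDeriv n (fun σ => exp (-z * (cosh σ + c))) τ * g τ‖ ≤
        K * exp (-(1 / 4) * τ ^ 2) := by
    intro τ hτ
    rw [norm_mul, ← mul_one (K * _)]
    exact mul_le_mul (abs_iteratedDeriv_exp_neg_mul_cosh_add_le n hz (le_of_lt hτ) c) (hg τ hτ)
      (norm_nonneg _) (by positivity)
  have hgauss : ∫ τ in Ioi (0 : ℝ), exp (-(1 / 4) * τ ^ 2) = √π := by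
    rw [integral_gaussian_Ioi, show π / (1 / 4) = 2 ^ 2 * π by ring, sqrt_mul (by norm_num),
      sqrt_sq (by norm_num)]
    ring
  calc _ ≤ ∫ τ in Ioi 0, K * exp (-(1 / 4) * τ ^ 2) :=
        norm_integral_le_of_norm_le
          ((integrable_exp_neg_mul_sq (by norm_num)).const_mul K).integrableOn
          ((ae_restrict_iff' measurableSet_Ioi).2 (.of_forall hbound))
    _ = _ := by rw [integral_const_mul, hgauss]; ring

/-- Two integral bounds used in the intermediate-angle regime: for every `m : ℕ` there is a
constant `C` (depending only on `m`) such that for all `z ≥ 1` and `δ ∈ [0, π]`: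
(i) for every real `μ`,
`|∫_δ^π D^{2m}[σ ↦ e^{z(cos σ − cos δ)}](τ) cos(τμ) dτ| ≤ C z^{2m}`; and
(ii) for every `μ ≥ 0`,
`|∫₀^∞ D^{2m}[σ ↦ e^{-z(cosh σ + cos δ)}](τ) e^{-τμ} dτ| ≤ C z^{2m} e^{-z(cos δ + 1/2)}`. -/
theorem intermediate_angle_integral_bounds (m : ℕ) :
    ∃ C : ℝ, ∀ z : ℝ, 1 ≤ z → ∀ δ ∈ Set.Icc (0 : ℝ) π,
      (∀ μ : ℝ,
        |∫ τ in δ..π,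
            iteratedDeriv (2 * m)
              (fun σ => Real.exp (z * (Real.cos σ - Real.cos δ))) τ * Real.cos (τ * μ)|
          ≤ C * z ^ (2 * m)) ∧
      (∀ μ : ℝ, 0 ≤ μ →
        |∫ τ in Set.Ioi (0 : ℝ),
            iteratedDeriv (2 * m)
              (fun σ => Real.exp (-z * (Real.cosh σ + Real.cos δ))) τ * Real.exp (-τ * μ)|
          ≤ C * z ^ (2 * m) * Real.exp (-z * (Real.cos δ + 1 / 2))) := by
  set n := 2 * m
  have hC₁ : 0 ≤ (n ! : ℝ) * π := by positivity
  have hC₂ : 0 ≤ (n ! : ℝ) * exp (n ^ 2 - 1 / 2) * √π := by positivity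
  refine ⟨n ! * π + n ! * exp (n ^ 2 - 1 / 2) * √π,
    fun z hz δ hδ => ⟨fun μ => ?_, fun μ hμ => ?_⟩⟩
  · refine (abs_intervalIntegral_iteratedDeriv_exp_mul_cos_sub_mul_le n hz hδ
      fun τ => abs_cos_le_one _).trans ?_
    gcongr
    exact le_add_of_nonneg_right hC₂
  · have hweight (τ : ℝ) (hτ : τ ∈ Ioi 0) : |exp (-τ * μ)| ≤ 1 := by
      rw [abs_of_pos (exp_pos _)]
      exact exp_le_one_iff.2 (by nlinarith [mem_Ioi.1 hτ])
    refine (abs_setIntegral_Ioi_iteratedDeriv_exp_neg_mul_cosh_add_mul_le n hz _ hweight).trans ?_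
    gcongr
    exact le_add_of_nonneg_left hC₁
end

section
/- Integration-by-parts identity without a cutoff: for every z > 0, every μ > 0 and every natural number m, one has (1/π)∫₀^π e^{z cos τ} cos(μτ) dτ − (sin(μπ)/π)∫₀^∞ e^{-z cosh τ} e^{-μτ} dτ = ((-1)^m/π)∫₀^π D^{2m}[σ ↦ e^{z cos σ}](τ) · (cos(μτ)/μ^{2m}) dτ − (sin(μπ)/π)∫₀^∞ D^{2m}[σ ↦ e^{-z cosh σ}](τ) · (e^{-μτ}/μ^{2m}) dτ, where D^{2m}[f](τ) denotes the 2m-th derivative of f at τ. -/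
open Real MeasureTheory Set


lemma aux_odd_deriv_zero {f : ℝ → ℝ} (hf : ∀ x, f (-x) = f x) {n : ℕ} (hn : Odd n) :
    iteratedDeriv n f 0 = 0 := by
  have h := iteratedDeriv_comp_neg n f 0
  have hfe : (fun x : ℝ => f (-x)) = f := funext hf
  rw [hfe, neg_zero, hn.neg_one_pow, smul_eq_mul] at h
  linarith

lemma aux_entire_bound {G : ℂ → ℂ} (hG : Differentiable ℂ G) (c : ℂ) (n : ℕ) {C : ℝ}
    (h : ∀ w ∈ Metric.closedBall c 1, ‖G w‖ ≤ C) : ‖iteratedDeriv n G c‖ ≤ (n.factorial : ℝ) * C := by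
  have hps := hG.hasFPowerSeriesOnBall c (R := 1) one_pos
  have h1 : iteratedDeriv n G c = iteratedFDeriv ℂ n G c (fun _ => 1) := by
    rw [iteratedDeriv_eq_iteratedFDeriv]
  have h2 := hps.factorial_smul (1 : ℂ) n
  rw [h1, ← h2]
  have hC : 0 ≤ C := le_trans (norm_nonneg _) (h c (Metric.mem_closedBall_self one_pos.le))
  have hint : ∫ θ : ℝ in (0)..2 * π, ‖G (circleMap c 1 θ)‖ ≤ ∫ θ : ℝ in (0)..2 * π, C := by
    apply intervalIntegral.integral_mono_on Real.two_pi_pos.le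
      ((Continuous.norm (hG.continuous.comp (continuous_circleMap c 1))).intervalIntegrable _ _)
      intervalIntegrable_const
    intro θ _
    apply h
    rw [Metric.mem_closedBall, dist_eq_norm, circleMap,
      show c + (1:ℝ) * Complex.exp (θ * Complex.I) - c = Complex.exp (θ * Complex.I) by push_cast; ring]
    rw [Complex.norm_exp]
    simp
  have h3 : ‖cauchyPowerSeries G c 1 n (fun _ => (1:ℂ))‖ ≤ C := by
    calc ‖cauchyPowerSeries G c 1 n (fun _ => (1:ℂ))‖
        ≤ ‖cauchyPowerSeries G c 1 n‖ * ∏ _i : Fin n, ‖(1:ℂ)‖ :=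
          (cauchyPowerSeries G c 1 n).le_opNorm _
      _ = ‖cauchyPowerSeries G c 1 n‖ := by simp
      _ ≤ ((2 * π)⁻¹ * ∫ θ : ℝ in (0)..2 * π, ‖G (circleMap c 1 θ)‖) * |(1:ℝ)|⁻¹ ^ n :=
          norm_cauchyPowerSeries_le G c 1 n
      _ ≤ ((2 * π)⁻¹ * ∫ θ : ℝ in (0)..2 * π, C) * |(1:ℝ)|⁻¹ ^ n := by
          gcongr
      _ = C := by
          rw [intervalIntegral.integral_const, smul_eq_mul]
          have : (2:ℝ) * π - 0 = 2 * π := by ring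
          rw [this]
          field_simp
          simp
  calc ‖n.factorial • cauchyPowerSeries G c 1 n (fun _ => (1:ℂ))‖
      = (n.factorial : ℝ) * ‖cauchyPowerSeries G c 1 n (fun _ => (1:ℂ))‖ := by
        rw [← Nat.cast_smul_eq_nsmul ℝ, norm_smul]; simp
    _ ≤ (n.factorial : ℝ) * C := by gcongr

lemma aux_iteratedDeriv_re_comp {G : ℂ → ℂ} (hG : Differentiable ℂ G) (b : ℂ) :
    ∀ (n : ℕ) (t : ℝ), iteratedDeriv n (fun s : ℝ => (G (b * s)).re) t
      = (b ^ n * iteratedDeriv n G (b * t)).re := by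
  intro n
  induction n with
  | zero => intro t; simp
  | succ n ih =>
    intro t
    have hdiff : Differentiable ℂ (iteratedDeriv n G) :=
      hG.contDiff.differentiable_iteratedDeriv n (by exact_mod_cast lt_top_iff_ne_top.2 (by simp))
    have ih' : iteratedDeriv n (fun s : ℝ => (G (b * s)).re)
        = fun t : ℝ => (b ^ n * iteratedDeriv n G (b * t)).re := funext ih
    rw [iteratedDeriv_succ, ih']
    have hin : HasDerivAt (iteratedDeriv n G) (iteratedDeriv (n+1) G (b * t)) (b * t) := by
      have := (hdiff (b * t)).hasDerivAt
      rwa [show deriv (iteratedDeriv n G) (b * t) = iteratedDeriv (n+1) G (b * t) by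
        rw [iteratedDeriv_succ]] at this
    have hmul : HasDerivAt (fun w : ℂ => b * w) b (t : ℂ) := by
      simpa using (hasDerivAt_id (t : ℂ)).const_mul b
    have hcomp : HasDerivAt (fun w : ℂ => iteratedDeriv n G (b * w))
        (iteratedDeriv (n+1) G (b * t) * b) (t : ℂ) := HasDerivAt.comp _ hin hmul
    have hc2 : HasDerivAt (fun w : ℂ => b ^ n * iteratedDeriv n G (b * w))
        (b ^ n * (iteratedDeriv (n+1) G (b * t) * b)) (t : ℂ) := hcomp.const_mul _
    have hc3 := hc2.real_of_complex
    rw [hc3.deriv]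
    congr 1
    ring

lemma aux_G_diff (z : ℝ) : Differentiable ℂ (fun w => Complex.exp (-(z:ℂ) * Complex.cos w)) :=
  Complex.differentiable_exp.comp ((differentiable_const _).mul Complex.differentiable_cos)

lemma aux_g_eq (z : ℝ) : (fun σ : ℝ => Real.exp (-z * Real.cosh σ))
    = fun t : ℝ => (Complex.exp (-(z:ℂ) * Complex.cos (Complex.I * t))).re := by
  funext t
  rw [mul_comm Complex.I (t:ℂ), Complex.cos_mul_I]
  rw [show -(z:ℂ) * Complex.cosh t = ((-z * Real.cosh t : ℝ) : ℂ) by push_cast; ring]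
  rw [Complex.exp_ofReal_re]

lemma aux_fshift_eq (z : ℝ) : (fun t : ℝ => Real.exp (z * Real.cos (π + t)))
    = fun t : ℝ => (Complex.exp (-(z:ℂ) * Complex.cos ((1:ℂ) * t))).re := by
  funext t
  rw [add_comm, Real.cos_add_pi, one_mul]
  rw [show -(z:ℂ) * Complex.cos t = ((z * -Real.cos t : ℝ) : ℂ) by push_cast; ring]
  rw [Complex.exp_ofReal_re]

lemma aux_f_pi (z : ℝ) (n : ℕ) : iteratedDeriv n (fun σ => Real.exp (z * Real.cos σ)) π
    = (iteratedDeriv n (fun w => Complex.exp (-(z:ℂ) * Complex.cos w)) 0).re := by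
  have h := congrFun (iteratedDeriv_comp_const_add n (fun σ => Real.exp (z * Real.cos σ)) π) 0
  rw [add_zero] at h
  rw [← h]
  have h2 := aux_iteratedDeriv_re_comp (aux_G_diff z) 1 n 0
  rw [show (fun t : ℝ => Real.exp (z * Real.cos (π + t)))
      = fun s : ℝ => ((fun w => Complex.exp (-(z:ℂ) * Complex.cos w)) ((1:ℂ) * s)).re from
    aux_fshift_eq z]
  rw [h2]
  norm_num

lemma aux_g_val (z : ℝ) (n : ℕ) (t : ℝ) : iteratedDeriv n (fun σ => Real.exp (-z * Real.cosh σ)) t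
    = (Complex.I ^ n * iteratedDeriv n (fun w => Complex.exp (-(z:ℂ) * Complex.cos w))
        (Complex.I * t)).re := by
  rw [show (fun σ : ℝ => Real.exp (-z * Real.cosh σ))
      = fun s : ℝ => ((fun w => Complex.exp (-(z:ℂ) * Complex.cos w)) (Complex.I * s)).re from
    aux_g_eq z]
  exact aux_iteratedDeriv_re_comp (aux_G_diff z) Complex.I n t

lemma aux_cancel (z : ℝ) (m : ℕ) :
    iteratedDeriv (2 * m) (fun σ => Real.exp (-z * Real.cosh σ)) 0
      = (-1 : ℝ) ^ m * iteratedDeriv (2 * m) (fun σ => Real.exp (z * Real.cos σ)) π := by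
  rw [aux_g_val, aux_f_pi]
  rw [show Complex.I * ((0:ℝ):ℂ) = 0 by simp]
  rw [show Complex.I ^ (2 * m) = (((-1 : ℝ) ^ m : ℝ) : ℂ) by
    rw [pow_mul, Complex.I_sq]; push_cast; ring]
  rw [Complex.re_ofReal_mul]

lemma aux_f_odd0 (z : ℝ) (k : ℕ) :
    iteratedDeriv (2 * k + 1) (fun σ => Real.exp (z * Real.cos σ)) 0 = 0 :=
  aux_odd_deriv_zero (fun x => by simp [Real.cos_neg]) ⟨k, by ring⟩

lemma aux_g_odd0 (z : ℝ) (k : ℕ) :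
    iteratedDeriv (2 * k + 1) (fun σ => Real.exp (-z * Real.cosh σ)) 0 = 0 :=
  aux_odd_deriv_zero (fun x => by simp [Real.cosh_neg]) ⟨k, by ring⟩

lemma aux_f_oddpi (z : ℝ) (k : ℕ) :
    iteratedDeriv (2 * k + 1) (fun σ => Real.exp (z * Real.cos σ)) π = 0 := by
  have h := congrFun
    (iteratedDeriv_comp_const_add (2 * k + 1) (fun σ => Real.exp (z * Real.cos σ)) π) 0
  rw [add_zero] at h
  rw [← h]
  apply aux_odd_deriv_zero _ ⟨k, by ring⟩
  intro x
  simp [Real.cos_add, Real.cos_neg, Real.sin_neg]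

lemma aux_g_bound (z : ℝ) (hz : 0 ≤ z) (k : ℕ) (τ : ℝ) :
    |iteratedDeriv k (fun σ => Real.exp (-z * Real.cosh σ)) τ| ≤ (k.factorial : ℝ) := by
  rw [aux_g_val]
  set G := fun w => Complex.exp (-(z:ℂ) * Complex.cos w) with hGdef
  have h1 : |(Complex.I ^ k * iteratedDeriv k G (Complex.I * τ)).re|
      ≤ ‖Complex.I ^ k * iteratedDeriv k G (Complex.I * τ)‖ := Complex.abs_re_le_norm _
  have h2 : ‖Complex.I ^ k * iteratedDeriv k G (Complex.I * τ)‖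
      = ‖iteratedDeriv k G (Complex.I * τ)‖ := by
    rw [norm_mul, norm_pow, Complex.norm_I, one_pow, one_mul]
  have h3 : ∀ w ∈ Metric.closedBall (Complex.I * (τ:ℂ)) 1, ‖G w‖ ≤ 1 := by
    intro w hw
    have hre : |w.re| ≤ 1 := by
      have := Complex.abs_re_le_norm (w - Complex.I * τ)
      rw [Metric.mem_closedBall, dist_eq_norm] at hw
      simp only [Complex.sub_re, Complex.mul_re, Complex.I_re, Complex.ofReal_re,
        Complex.I_im, Complex.ofReal_im] at this
      calc |w.re| = |w.re - (0 * τ - 1 * 0)| := by norm_num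
        _ ≤ ‖w - Complex.I * τ‖ := this
        _ ≤ 1 := hw
    have hcos : 0 ≤ (Complex.cos w).re := by
      have : (Complex.cos w).re = Real.cos w.re * Real.cosh w.im := by
        rw [Complex.cos_eq]
        simp [Complex.cos_ofReal_re, Complex.cosh_ofReal_re]
      rw [this]
      apply mul_nonneg _ (Real.cosh_pos _).le
      apply Real.cos_nonneg_of_mem_Icc
      constructor
      · nlinarith [Real.pi_gt_three, abs_le.mp hre]
      · nlinarith [Real.pi_gt_three, abs_le.mp hre]
    rw [hGdef]
    simp only
    rw [Complex.norm_exp]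
    rw [show (-(z:ℂ) * Complex.cos w).re = -z * (Complex.cos w).re by
      rw [show -(z:ℂ) = ((-z : ℝ) : ℂ) by push_cast; ring, Complex.re_ofReal_mul]]
    rw [Real.exp_le_one_iff]
    nlinarith
  calc |(Complex.I ^ k * iteratedDeriv k G (Complex.I * τ)).re|
      ≤ ‖iteratedDeriv k G (Complex.I * τ)‖ := h2 ▸ h1
    _ ≤ (k.factorial : ℝ) * 1 := aux_entire_bound (aux_G_diff z) _ k h3
    _ = (k.factorial : ℝ) := mul_one _

lemma aux_hasDerivAt_iter {f : ℝ → ℝ} (hf : ContDiff ℝ (⊤ : ℕ∞) f) (k : ℕ) (x : ℝ) :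
    HasDerivAt (iteratedDeriv k f) (iteratedDeriv (k + 1) f x) x := by
  have h := ((hf.differentiable_iteratedDeriv k
    (by exact_mod_cast lt_top_iff_ne_top.2 (by simp))) x).hasDerivAt
  rwa [show deriv (iteratedDeriv k f) x = iteratedDeriv (k+1) f x by rw [iteratedDeriv_succ]] at h

lemma aux_f_contDiff (z : ℝ) : ContDiff ℝ (⊤ : ℕ∞) (fun σ => Real.exp (z * Real.cos σ)) :=
  Real.contDiff_exp.comp (contDiff_const.mul Real.contDiff_cos)

lemma aux_g_contDiff (z : ℝ) : ContDiff ℝ (⊤ : ℕ∞) (fun σ => Real.exp (-z * Real.cosh σ)) :=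
  Real.contDiff_exp.comp (contDiff_const.mul Real.contDiff_cosh)

lemma aux_hasDerivAt_cosmul (μ x : ℝ) :
    HasDerivAt (fun τ => Real.cos (μ * τ)) (-μ * Real.sin (μ * x)) x := by
  have h := (Real.hasDerivAt_cos (μ * x)).comp x ((hasDerivAt_id x).const_mul μ)
  simpa [mul_comm, Function.comp_def] using h

lemma aux_hasDerivAt_sinmul (μ x : ℝ) :
    HasDerivAt (fun τ => Real.sin (μ * τ)) (μ * Real.cos (μ * x)) x := by
  have h := (Real.hasDerivAt_sin (μ * x)).comp x ((hasDerivAt_id x).const_mul μ)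
  simpa [mul_comm, Function.comp_def] using h

lemma aux_hasDerivAt_expmul (μ x : ℝ) :
    HasDerivAt (fun τ => Real.exp (-μ * τ)) (-μ * Real.exp (-μ * x)) x := by
  have h := (Real.hasDerivAt_exp (-μ * x)).comp x ((hasDerivAt_id x).const_mul (-μ))
  simp only [Function.comp_def] at h
  exact h.congr_deriv (by ring)

lemma aux_A_rec (z μ : ℝ) (k : ℕ)
    (h0 : iteratedDeriv (k + 1) (fun σ => Real.exp (z * Real.cos σ)) 0 = 0)
    (hπ : iteratedDeriv (k + 1) (fun σ => Real.exp (z * Real.cos σ)) π = 0) :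
    ∫ τ in (0:ℝ)..π, Real.cos (μ * τ) * iteratedDeriv (k + 2) (fun σ => Real.exp (z * Real.cos σ)) τ
      = μ * Real.sin (μ * π) * iteratedDeriv k (fun σ => Real.exp (z * Real.cos σ)) π
        - μ ^ 2 * ∫ τ in (0:ℝ)..π,
            Real.cos (μ * τ) * iteratedDeriv k (fun σ => Real.exp (z * Real.cos σ)) τ := by
  set f := fun σ : ℝ => Real.exp (z * Real.cos σ) with hfdef
  have hf := aux_f_contDiff z
  have hcont : ∀ j : ℕ, Continuous (iteratedDeriv j f) := fun j =>
    hf.continuous_iteratedDeriv j (by exact_mod_cast le_top)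
  have step1 : ∫ τ in (0:ℝ)..π, Real.cos (μ * τ) * iteratedDeriv (k + 2) f τ
      = μ * ∫ τ in (0:ℝ)..π, Real.sin (μ * τ) * iteratedDeriv (k + 1) f τ := by
    have h := intervalIntegral.integral_mul_deriv_eq_deriv_mul
      (u := fun τ => Real.cos (μ * τ)) (u' := fun τ => -μ * Real.sin (μ * τ))
      (v := iteratedDeriv (k + 1) f) (v' := iteratedDeriv (k + 2) f)
      (a := 0) (b := π)
      (fun x _ => aux_hasDerivAt_cosmul μ x)
      (fun x _ => aux_hasDerivAt_iter hf (k + 1) x)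
      (((continuous_const.mul ((Real.continuous_sin).comp
          (continuous_const.mul continuous_id)))).intervalIntegrable 0 π)
      ((hcont (k + 2)).intervalIntegrable 0 π)
    rw [h, h0, hπ]
    rw [← intervalIntegral.integral_const_mul]
    rw [show ∫ x in (0:ℝ)..π, -μ * Real.sin (μ * x) * iteratedDeriv (k + 1) f x
        = ∫ x in (0:ℝ)..π, -(μ * (Real.sin (μ * x) * iteratedDeriv (k + 1) f x)) by
      congr 1; funext x; ring]
    rw [intervalIntegral.integral_neg]
    ring
  have step2 : ∫ τ in (0:ℝ)..π, Real.sin (μ * τ) * iteratedDeriv (k + 1) f τ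
      = Real.sin (μ * π) * iteratedDeriv k f π
        - μ * ∫ τ in (0:ℝ)..π, Real.cos (μ * τ) * iteratedDeriv k f τ := by
    have h := intervalIntegral.integral_mul_deriv_eq_deriv_mul
      (u := fun τ => Real.sin (μ * τ)) (u' := fun τ => μ * Real.cos (μ * τ))
      (v := iteratedDeriv k f) (v' := iteratedDeriv (k + 1) f)
      (a := 0) (b := π)
      (fun x _ => aux_hasDerivAt_sinmul μ x)
      (fun x _ => aux_hasDerivAt_iter hf k x)
      (((continuous_const.mul ((Real.continuous_cos).comp
          (continuous_const.mul continuous_id)))).intervalIntegrable 0 π)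
      ((hcont (k + 1)).intervalIntegrable 0 π)
    rw [h]
    simp only [mul_zero, Real.sin_zero, zero_mul, sub_zero]
    rw [← intervalIntegral.integral_const_mul]
    congr 2
    funext τ
    ring
  rw [step1, step2]
  ring

lemma aux_exp_tendsto (μ : ℝ) (hμ : 0 < μ) :
    Filter.Tendsto (fun τ : ℝ => Real.exp (-μ * τ)) Filter.atTop (nhds 0) := by
  have h1 : Filter.Tendsto (fun τ : ℝ => -μ * τ) Filter.atTop Filter.atBot := by
    exact Filter.Tendsto.const_mul_atTop_of_neg (neg_neg_iff_pos.mpr hμ) Filter.tendsto_id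
  exact Real.tendsto_exp_atBot.comp h1

lemma aux_B_integrable (z μ : ℝ) (hz : 0 < z) (hμ : 0 < μ) (j : ℕ) :
    IntegrableOn (fun τ => Real.exp (-μ * τ)
      * iteratedDeriv j (fun σ => Real.exp (-z * Real.cosh σ)) τ) (Ioi (0:ℝ)) := by
  apply Integrable.mono' (g := fun τ => (j.factorial : ℝ) * Real.exp (-μ * τ))
  · exact (exp_neg_integrableOn_Ioi 0 hμ).const_mul _
  · exact (((Real.continuous_exp.comp (continuous_const.mul continuous_id)).mul
      ((aux_g_contDiff z).continuous_iteratedDeriv j (by exact_mod_cast le_top)))).aestronglyMeasurable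
  · rw [ae_restrict_iff' measurableSet_Ioi]
    filter_upwards with τ hτ
    rw [norm_mul, Real.norm_eq_abs, Real.norm_eq_abs, Real.abs_exp]
    calc Real.exp (-μ * τ) * |iteratedDeriv j (fun σ => Real.exp (-z * Real.cosh σ)) τ|
        ≤ Real.exp (-μ * τ) * (j.factorial : ℝ) := by
          gcongr
          exact aux_g_bound z hz.le j τ
      _ = (j.factorial : ℝ) * Real.exp (-μ * τ) := by ring

lemma aux_B_step (z μ : ℝ) (hz : 0 < z) (hμ : 0 < μ) (j : ℕ) :
    ∫ τ in Ioi (0:ℝ), Real.exp (-μ * τ)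
        * iteratedDeriv (j + 1) (fun σ => Real.exp (-z * Real.cosh σ)) τ
      = -(iteratedDeriv j (fun σ => Real.exp (-z * Real.cosh σ)) 0)
        + μ * ∫ τ in Ioi (0:ℝ), Real.exp (-μ * τ)
            * iteratedDeriv j (fun σ => Real.exp (-z * Real.cosh σ)) τ := by
  set g := fun σ : ℝ => Real.exp (-z * Real.cosh σ) with hgdef
  have hg := aux_g_contDiff z
  have hcont : ∀ i : ℕ, Continuous (iteratedDeriv i g) := fun i =>
    hg.continuous_iteratedDeriv i (by exact_mod_cast le_top)
  have h := MeasureTheory.integral_Ioi_mul_deriv_eq_deriv_mul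
    (u := fun τ => Real.exp (-μ * τ)) (u' := fun τ => -μ * Real.exp (-μ * τ))
    (v := iteratedDeriv j g) (v' := iteratedDeriv (j + 1) g)
    (a := 0) (a' := iteratedDeriv j g 0) (b' := 0)
    (fun x _ => aux_hasDerivAt_expmul μ x)
    (fun x _ => aux_hasDerivAt_iter hg j x)
    (aux_B_integrable z μ hz hμ (j + 1))
    (by
      have := (aux_B_integrable z μ hz hμ j).const_mul (-μ)
      apply this.congr
      filter_upwards with τ
      simp only [Pi.mul_apply]
      ring)
    (by
      have hc : ContinuousAt (fun τ => Real.exp (-μ * τ) * iteratedDeriv j g τ) 0 :=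
        ((Real.continuous_exp.comp (continuous_const.mul continuous_id)).mul
          (hcont j)).continuousAt
      have := hc.tendsto
      simp only [mul_zero, Real.exp_zero, one_mul] at this
      exact this.mono_left nhdsWithin_le_nhds)
    (by
      apply squeeze_zero_norm' (a := fun τ => (j.factorial : ℝ) * Real.exp (-μ * τ))
      · filter_upwards with τ
        rw [Pi.mul_apply, norm_mul, Real.norm_eq_abs, Real.norm_eq_abs, Real.abs_exp]
        calc Real.exp (-μ * τ) * |iteratedDeriv j g τ|
            ≤ Real.exp (-μ * τ) * (j.factorial : ℝ) := by
              gcongr; exact aux_g_bound z hz.le j τ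
          _ = (j.factorial : ℝ) * Real.exp (-μ * τ) := by ring
      · simpa using (aux_exp_tendsto μ hμ).const_mul (j.factorial : ℝ))
  rw [h]
  rw [show ∫ τ in Ioi (0:ℝ), -μ * Real.exp (-μ * τ) * iteratedDeriv j g τ
      = -μ * ∫ τ in Ioi (0:ℝ), Real.exp (-μ * τ) * iteratedDeriv j g τ by
    rw [← MeasureTheory.integral_const_mul]; congr 1; funext τ; ring]
  ring

/-- Integration-by-parts identity without a cutoff: for every `z > 0`, `μ > 0` and `m : ℕ`,
`(1/π)∫₀^π e^{z cos τ} cos(μτ) dτ − (sin(μπ)/π)∫₀^∞ e^{-z cosh τ} e^{-μτ} dτ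
 = ((-1)^m/π)∫₀^π D^{2m}[σ ↦ e^{z cos σ}](τ) (cos(μτ)/μ^{2m}) dτ
   − (sin(μπ)/π)∫₀^∞ D^{2m}[σ ↦ e^{-z cosh σ}](τ) (e^{-μτ}/μ^{2m}) dτ`. -/
theorem integration_by_parts_without_cutoff (z μ : ℝ) (hz : 0 < z) (hμ : 0 < μ) (m : ℕ) :
    (1 / π) * (∫ τ in (0 : ℝ)..π, Real.exp (z * Real.cos τ) * Real.cos (μ * τ))
      - (Real.sin (μ * π) / π) *
        (∫ τ in Set.Ioi (0 : ℝ), Real.exp (-z * Real.cosh τ) * Real.exp (-μ * τ))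
    = ((-1 : ℝ) ^ m / π) * (∫ τ in (0 : ℝ)..π,
          iteratedDeriv (2 * m) (fun σ => Real.exp (z * Real.cos σ)) τ *
            (Real.cos (μ * τ) / μ ^ (2 * m)))
      - (Real.sin (μ * π) / π) * (∫ τ in Set.Ioi (0 : ℝ),
          iteratedDeriv (2 * m) (fun σ => Real.exp (-z * Real.cosh σ)) τ *
            (Real.exp (-μ * τ) / μ ^ (2 * m))) := by
  have key : ∀ n : ℕ,
      ((-1:ℝ)^n / π) * ((∫ τ in (0:ℝ)..π,
          Real.cos (μ*τ) * iteratedDeriv (2*n) (fun σ => Real.exp (z * Real.cos σ)) τ) / μ^(2*n))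
        - (Real.sin (μ*π)/π) * ((∫ τ in Ioi (0:ℝ),
          Real.exp (-μ*τ) * iteratedDeriv (2*n) (fun σ => Real.exp (-z * Real.cosh σ)) τ) / μ^(2*n))
      = (1/π) * (∫ τ in (0:ℝ)..π, Real.cos (μ*τ) * Real.exp (z * Real.cos τ))
        - (Real.sin (μ*π)/π) * (∫ τ in Ioi (0:ℝ), Real.exp (-μ*τ) * Real.exp (-z * Real.cosh τ)) := by
    intro n
    induction n with
    | zero => simp [iteratedDeriv_zero]
    | succ n ih =>
      rw [← ih]
      have h2 : 2 * (n + 1) = 2 * n + 2 := by ring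
      have hA := aux_A_rec z μ (2*n) (aux_f_odd0 z n) (aux_f_oddpi z n)
      have hB1 := aux_B_step z μ hz hμ (2*n+1)
      have hB2 := aux_B_step z μ hz hμ (2*n)
      rw [aux_g_odd0 z n, neg_zero, zero_add] at hB1
      rw [aux_cancel z n] at hB2
      rw [h2, hA, hB1, hB2]
      have hπ0 : (π:ℝ) ≠ 0 := Real.pi_ne_zero
      have hμ0 : (μ:ℝ) ≠ 0 := hμ.ne'
      have hμp : (μ:ℝ)^(2*n) ≠ 0 := pow_ne_zero _ hμ0
      set a := ∫ τ in (0:ℝ)..π,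
        Real.cos (μ*τ) * iteratedDeriv (2*n) (fun σ => Real.exp (z * Real.cos σ)) τ
      set b := ∫ τ in Ioi (0:ℝ),
        Real.exp (-μ*τ) * iteratedDeriv (2*n) (fun σ => Real.exp (-z * Real.cosh σ)) τ
      set Fp := iteratedDeriv (2*n) (fun σ => Real.exp (z * Real.cos σ)) π
      rw [show (2*n+2) = (2*n) + 2 by ring, pow_add]
      field_simp
      ring
  have hkey := key m
  have e1 : (∫ τ in (0:ℝ)..π, Real.exp (z * Real.cos τ) * Real.cos (μ * τ))
      = ∫ τ in (0:ℝ)..π, Real.cos (μ*τ) * Real.exp (z * Real.cos τ) := by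
    congr 1; funext τ; ring
  have e2 : (∫ τ in Set.Ioi (0:ℝ), Real.exp (-z * Real.cosh τ) * Real.exp (-μ * τ))
      = ∫ τ in Ioi (0:ℝ), Real.exp (-μ*τ) * Real.exp (-z * Real.cosh τ) := by
    congr 1; funext τ; ring
  have e3 : (∫ τ in (0:ℝ)..π,
        iteratedDeriv (2 * m) (fun σ => Real.exp (z * Real.cos σ)) τ
          * (Real.cos (μ * τ) / μ ^ (2 * m)))
      = (∫ τ in (0:ℝ)..π,
          Real.cos (μ*τ) * iteratedDeriv (2*m) (fun σ => Real.exp (z * Real.cos σ)) τ) / μ^(2*m) := by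
    rw [← intervalIntegral.integral_div]
    congr 1; funext τ; ring
  have e4 : (∫ τ in Set.Ioi (0:ℝ),
        iteratedDeriv (2 * m) (fun σ => Real.exp (-z * Real.cosh σ)) τ
          * (Real.exp (-μ * τ) / μ ^ (2 * m)))
      = (∫ τ in Ioi (0:ℝ),
          Real.exp (-μ*τ) * iteratedDeriv (2*m) (fun σ => Real.exp (-z * Real.cosh σ)) τ) / μ^(2*m) := by
    rw [← MeasureTheory.integral_div]
    congr 1; funext τ; ring
  rw [e1, e2, e3, e4, ← hkey]
end
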